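/- (Corollary 3 of the paper: the likelihood ratio test has only trivial power against a composite alternative.) In the finite-sample Bernoulli testing framework, for any b, b̃ ∈ ℝ^K the vector (1/2, …, 1/2) belongs to both N(b) and N(b̃). Consequently, every test φ : {0,1}^n → [0,1] satisfying RP_φ(p) ≤ α for all p ∈ N(b) has inf_{p ∈ N(b̃)} RP_φ(p) ≤ α; that is, its minimal power over the set of distributions compatible with the composite alternative β = b̃ is at most its size α. -/
import Mathlib


/-- Likelihood of the binary outcome vector `y` under Bernoulli probabilities `p`. -/
def lik {n : ℕ} (p : Fin n → ℝ) (y : Fin n → Bool) : ℝ :=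
  ∏ i, if y i then p i else 1 - p i

/-- Rejection probability of the (possibly randomized) test `φ` under `p`. -/
def rejProb {n : ℕ} (φ : (Fin n → Bool) → ℝ) (p : Fin n → ℝ) : ℝ :=
  ∑ y : Fin n → Bool, φ y * lik p y

/-- The set `N(b)` of Bernoulli probability vectors compatible with the null `β = b`. -/
def nullSet {n K : ℕ} (X : Fin n → Fin K → ℝ) (b : Fin K → ℝ) : Set (Fin n → ℝ) :=
  {p | (∀ i, p i ∈ Set.Icc (0 : ℝ) 1) ∧
    ∀ i, (0 ≤ (∑ j, X i j * b j) → 1/2 ≤ p i) ∧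
         ((∑ j, X i j * b j) ≤ 0 → p i ≤ 1/2)}

/-- The least favorable null probabilities `p̄` paired with alternative `p̃`. -/
noncomputable def pbar {n K : ℕ} (X : Fin n → Fin K → ℝ) (b : Fin K → ℝ)
    (pt : Fin n → ℝ) : Fin n → ℝ :=
  fun i => if (∑ j, X i j * b j) * (pt i - 1/2) < 0 ∨
      ((∑ j, X i j * b j) = 0 ∧ pt i < 1/2) then 1/2 else pt i

/-- The likelihood ratio test `φ̄` of `p̄` against `p̃`, with constant `k` and
randomization `ξ`. -/
noncomputable def lrt {n : ℕ} (pt pb : Fin n → ℝ) (k ξ : ℝ)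
    (y : Fin n → Bool) : ℝ :=
  if k * lik pb y < lik pt y then 1
  else if lik pt y = k * lik pb y then ξ else 0

/-- Corollary 3: the vector `(1/2, …, 1/2)` lies in `N(b)` and `N(b̃)` for any `b, b̃`;
consequently any level-`α` test of the composite null `N(b)` has minimal power at most
`α` over the set of distributions compatible with the composite alternative `β = b̃`. -/
theorem corollary3_trivial_power
    {n K : ℕ} (hn : 1 ≤ n)
    (X : Fin n → Fin K → ℝ) (α : ℝ) (hα : α ∈ Set.Ioo (0 : ℝ) 1)
    (b btil : Fin K → ℝ) :
    ((fun _ : Fin n => (1/2 : ℝ)) ∈ nullSet X b ∧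
     (fun _ : Fin n => (1/2 : ℝ)) ∈ nullSet X btil) ∧
    ∀ φ : (Fin n → Bool) → ℝ, (∀ y, φ y ∈ Set.Icc (0 : ℝ) 1) →
      (∀ p ∈ nullSet X b, rejProb φ p ≤ α) →
      sInf ((fun p => rejProb φ p) '' nullSet X btil) ≤ α := by
  have hhalf : ∀ c : Fin K → ℝ, (fun _ : Fin n => (1/2 : ℝ)) ∈ nullSet X c := by
    intro c
    refine ⟨fun i => ⟨by norm_num, by norm_num⟩, fun i => ⟨fun _ => le_refl _, fun _ => le_refl _⟩⟩
  refine ⟨⟨hhalf b, hhalf btil⟩, ?_⟩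
  intro φ hφ hlevel
  have hmem : rejProb φ (fun _ => (1/2 : ℝ)) ∈ (fun p => rejProb φ p) '' nullSet X btil :=
    ⟨_, hhalf btil, rfl⟩
  have hbdd : BddBelow ((fun p => rejProb φ p) '' nullSet X btil) := by
    refine ⟨0, ?_⟩
    rintro x ⟨p, hp, rfl⟩
    apply Finset.sum_nonneg
    intro y _
    apply mul_nonneg (hφ y).1
    apply Finset.prod_nonneg
    intro i _
    rcases hp.1 i with ⟨h0, h1⟩
    split <;> linarith
  exact le_trans (csInf_le hbdd hmem) (hlevel _ (hhalf b))
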